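/- Let K ⊆ ℝ^n be compact. The dual cone of the conical hull C(K) of the point-evaluation functionals {ℓ_v : v ∈ K} is exactly the cone P_{2d}(K) of polynomials of degree ≤ 2d that are nonnegative on K, and consequently C(K) = P_{2d}(K)*. -/

import Mathlib

/-!
Pairing with `Lmap v` is evaluation at `v`, and pairing with a fixed `p` is linear in the moment
sequence, so `p` is nonnegative on `C(K)` exactly when it is nonnegative on `K`. For the reverse
inclusion `P_{2d}(K)* ⊆ C(K)` the cone `C(K)` must be closed: all generators have constant moment
`1`, so `C(K)` is the cone over the convex hull of the compact set `Lmap '' K`, which is compact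
by Carathéodory's theorem. A point outside the closed cone is then separated from it by a linear
functional (Farkas), and every linear functional on moment sequences is pairing with a polynomial
of degree `≤ 2d`; that polynomial lies in `P_{2d}(K)` and pairs negatively with the point.
-/

open MeasureTheory

/-- The space of truncated moment sequences: real sequences indexed by monomials
(exponent vectors) of total degree at most `d` in `n` variables; this is the
(coordinatized) dual space `ℝ[x]_d^*`. -/
abbrev MomSpace (n d : ℕ) := {α : Fin n →₀ ℕ // (α.sum fun _ e => e) ≤ d} → ℝ

/-- Evaluation of the monomial `x^α` at the point `v`. -/
def evalMono {n : ℕ} (v : Fin n → ℝ) (α : Fin n →₀ ℕ) : ℝ :=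
  α.prod fun i k => v i ^ k

/-- The point-evaluation functional `ℓ_v` on `ℝ[x]_d`, in moment coordinates. -/
def Lmap (n d : ℕ) (v : Fin n → ℝ) : MomSpace n d := fun α => evalMono v α.1

/-- The pairing `⟨p, y⟩` between a polynomial `p` (of degree ≤ d) and a moment
sequence `y`; it equals `ℓ(p)` for the functional `ℓ` with moments `y`. -/
noncomputable def momPair {n d : ℕ} (y : MomSpace n d)
    (p : MvPolynomial (Fin n) ℝ) : ℝ :=
  ∑ α ∈ p.support, p.coeff α *
    (if h : (α.sum fun _ e => e) ≤ d then y ⟨α, h⟩ else 0)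

/-- The conical hull of a set: all finite nonnegative combinations. -/
def conicalHull {V : Type*} [AddCommMonoid V] [Module ℝ V] (s : Set V) : Set V :=
  {y | ∃ (k : ℕ) (c : Fin k → ℝ) (z : Fin k → V),
    (∀ i, 0 ≤ c i) ∧ (∀ i, z i ∈ s) ∧ y = ∑ i, c i • z i}

/-- The cone `R_{2d}(K)` of moment sequences representable by a finite Borel
measure supported on `K`. -/
def RepCone (n d : ℕ) (K : Set (Fin n → ℝ)) : Set (MomSpace n d) :=
  {y | ∃ σ : Measure (Fin n → ℝ), IsFiniteMeasure σ ∧ σ Kᶜ = 0 ∧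
    ∀ α : {α : Fin n →₀ ℕ // (α.sum fun _ e => e) ≤ d},
      y α = ∫ v in K, evalMono v α.1 ∂σ}

open Set

section ConicalHull

variable {V : Type*} [AddCommGroup V] [Module ℝ V] {s : Set V}

theorem conicalHull_eq_hull : conicalHull s = PointedCone.hull ℝ s := by
  ext y
  rw [SetLike.mem_coe, Submodule.mem_span_set']
  constructor
  · rintro ⟨k, c, z, hc, hz, rfl⟩
    exact ⟨k, fun i => ⟨c i, hc i⟩, fun i => ⟨z i, hz i⟩, rfl⟩
  · rintro ⟨k, c, z, rfl⟩
    exact ⟨k, fun i => c i, fun i => z i, fun i => (c i).2, fun i => (z i).2, rfl⟩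

theorem subset_conicalHull : s ⊆ conicalHull s :=
  conicalHull_eq_hull (s := s) ▸ PointedCone.subset_hull

theorem convexHull_subset_conicalHull : convexHull ℝ s ⊆ conicalHull s :=
  convexHull_min subset_conicalHull (conicalHull_eq_hull (s := s) ▸ PointedCone.convex _)

theorem nonneg_of_mem_conicalHull (ℓ : V →ₗ[ℝ] ℝ) (hs : ∀ x ∈ s, 0 ≤ ℓ x) {y : V}
    (hy : y ∈ conicalHull s) : 0 ≤ ℓ y := by
  obtain ⟨k, c, z, hc, hz, rfl⟩ := hy
  simp only [map_sum, map_smul, smul_eq_mul]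
  exact Finset.sum_nonneg fun i _ => mul_nonneg (hc i) (hs _ (hz i))

theorem eq_zero_or_eq_smul_of_mem_conicalHull (φ : V →ₗ[ℝ] ℝ) (hφ : ∀ x ∈ s, φ x = 1)
    {y : V} (hy : y ∈ conicalHull s) : y = 0 ∨ ∃ x ∈ convexHull ℝ s, y = φ y • x := by
  obtain ⟨k, c, z, hc, hz, rfl⟩ := hy
  have hφy : φ (∑ i, c i • z i) = ∑ i, c i := by simp [hφ _ (hz _)]
  rcases (Finset.sum_nonneg fun i _ => hc i).eq_or_lt with hsum | hsum
  · left
    have hc0 := (Finset.sum_eq_zero_iff_of_nonneg fun i _ => hc i).1 hsum.symm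
    exact Finset.sum_eq_zero fun i hi => by rw [hc0 i hi, zero_smul]
  · refine Or.inr ⟨Finset.univ.centerMass c z,
      Finset.centerMass_mem_convexHull _ (fun i _ => hc i) hsum fun i _ => hz i, ?_⟩
    rw [hφy, Finset.centerMass, smul_inv_smul₀ hsum.ne']

theorem isClosed_conicalHull [TopologicalSpace V] [ContinuousSMul ℝ V] [T2Space V]
    (φ : V →L[ℝ] ℝ) (hφ : ∀ x ∈ s, φ x = 1) (hs : IsCompact (convexHull ℝ s)) :
    IsClosed (conicalHull s) := by
  refine isClosed_of_closure_subset fun y hy => ?_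
  -- Below the height `φ y + 1` the cone coincides with the compact set `T`.
  set U := {z | φ z < φ y + 1}
  set T := insert 0 ((fun p : ℝ × V => p.1 • p.2) '' (Icc 0 (φ y + 1) ×ˢ convexHull ℝ s))
  have hT : IsCompact T :=
    ((isCompact_Icc.prod hs).image (continuous_fst.smul continuous_snd)).insert 0
  have hTC : T ⊆ conicalHull s := by
    rw [conicalHull_eq_hull]
    rintro _ (rfl | ⟨⟨t, x⟩, ⟨ht, hx⟩, rfl⟩)
    · exact zero_mem _
    · refine PointedCone.smul_mem _ ht.1 ?_
      rw [← SetLike.mem_coe, ← conicalHull_eq_hull]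
      exact convexHull_subset_conicalHull hx
  have hUT : U ∩ conicalHull s ⊆ T := by
    rintro z ⟨hzU, hz⟩
    rcases eq_zero_or_eq_smul_of_mem_conicalHull φ.toLinearMap hφ hz with rfl | ⟨x, hx, hzx⟩
    · exact mem_insert _ _
    · have hφz : 0 ≤ φ z :=
        nonneg_of_mem_conicalHull φ.toLinearMap (fun x hx => (hφ x hx).symm ▸ zero_le_one) hz
      exact Or.inr ⟨(φ z, x), ⟨⟨hφz, hzU.le⟩, hx⟩, hzx.symm⟩
  have hU : IsOpen U := isOpen_lt φ.continuous continuous_const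
  have hyU : y ∈ U := show φ y < φ y + 1 from lt_add_one _
  exact hTC (hT.isClosed.closure_subset_iff.2 hUT (hU.inter_closure ⟨hyU, hy⟩))

theorem hyperplane_separation_conicalHull [TopologicalSpace V] [IsTopologicalAddGroup V]
    [ContinuousSMul ℝ V] [LocallyConvexSpace ℝ V] (hs : IsClosed (conicalHull s))
    {y : V} (hy : y ∉ conicalHull s) :
    ∃ f : StrongDual ℝ V, (∀ x ∈ s, 0 ≤ f x) ∧ f y < 0 := by
  rw [conicalHull_eq_hull] at hs hy
  obtain ⟨f, hfC, hfy⟩ := ProperCone.hyperplane_separation_point ⟨_, hs⟩ hy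
  exact ⟨f, fun x hx => hfC x (PointedCone.subset_hull hx), hfy⟩

end ConicalHull

theorem IsCompact.convexHull {E : Type*} [AddCommGroup E] [Module ℝ E] [TopologicalSpace E]
    [ContinuousAdd E] [ContinuousSMul ℝ E] [FiniteDimensional ℝ E] {s : Set E}
    (hs : IsCompact s) : IsCompact (_root_.convexHull ℝ s) := by
  have hcara : _root_.convexHull ℝ s = ⋃ k ∈ Finset.range (Module.finrank ℝ E + 2),
      (fun p : (Fin k → ℝ) × (Fin k → E) => ∑ i, p.1 i • p.2 i) ''
        (stdSimplex ℝ (Fin k) ×ˢ univ.pi fun _ => s) := by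
    refine Subset.antisymm (fun x hx => ?_) ?_
    · -- Carathéodory: `finrank E + 1` points of `s` suffice.
      obtain ⟨ι, _, z, w, hzs, hz, hw0, hw1, rfl⟩ := eq_pos_convex_span_of_mem_convexHull hx
      have hcard : Fintype.card ι < Module.finrank ℝ E + 2 :=
        Nat.lt_succ_of_le <| hz.card_le_finrank_succ.trans <|
          Nat.succ_le_succ (Submodule.finrank_le _)
      let e := (Fintype.equivFin ι).symm
      refine mem_biUnion (Finset.mem_range.2 hcard) ⟨(w ∘ e, z ∘ e),
        ⟨⟨fun _ => (hw0 _).le, ?_⟩, fun _ _ => hzs (mem_range_self _)⟩, ?_⟩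
      · simpa [e.sum_comp] using hw1
      · exact e.sum_comp fun i => w i • z i
    · refine iUnion₂_subset fun k _ => ?_
      rintro _ ⟨⟨w, z⟩, ⟨hw, hz⟩, rfl⟩
      exact (convex_convexHull ℝ s).sum_mem (fun i _ => hw.1 i) hw.2
        fun i _ => subset_convexHull ℝ s (hz i (mem_univ i))
  rw [hcara]
  exact (Finset.range _).isCompact_biUnion fun k _ =>
    ((isCompact_stdSimplex ℝ (Fin k)).prod (isCompact_univ_pi fun _ => hs)).image (by fun_prop)

abbrev MomIndex (n D : ℕ) := {α : Fin n →₀ ℕ // (α.sum fun _ e => e) ≤ D}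

instance (n D : ℕ) : Finite (MomIndex n D) := (Finsupp.finite_of_degree_le D).to_subtype

noncomputable instance (n D : ℕ) : Fintype (MomIndex n D) := Fintype.ofFinite _

section Moments

variable {n D : ℕ}

theorem continuous_Lmap : Continuous (Lmap n D) :=
  continuous_pi fun _ => continuous_finsetProd _ fun i _ => (continuous_apply i).pow _

theorem Lmap_apply_zero (v : Fin n → ℝ) : Lmap n D v ⟨0, by simp⟩ = 1 := by
  simp [Lmap, evalMono]

theorem isClosed_conicalHull_Lmap {K : Set (Fin n → ℝ)} (hK : IsCompact K) :
    IsClosed (conicalHull (Lmap n D '' K)) :=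
  isClosed_conicalHull (ContinuousLinearMap.proj ⟨0, by simp⟩)
    (by rintro _ ⟨v, -, rfl⟩; exact Lmap_apply_zero (D := D) v)
    (hK.image continuous_Lmap).convexHull

theorem momPair_Lmap (v : Fin n → ℝ) {p : MvPolynomial (Fin n) ℝ} (hp : p.totalDegree ≤ D) :
    momPair (Lmap n D v) p = MvPolynomial.eval v p := by
  rw [MvPolynomial.eval_eq, momPair]
  refine Finset.sum_congr rfl fun α hα => ?_
  rw [dif_pos ((MvPolynomial.le_totalDegree hα).trans hp)]
  rfl

theorem momPair_eq_sum (y : MomSpace n D) (p : MvPolynomial (Fin n) ℝ) :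
    momPair y p = ∑ β : MomIndex n D, p.coeff β.1 * y β := by
  classical
  set g : (Fin n →₀ ℕ) → ℝ := fun α =>
    p.coeff α * if h : (α.sum fun _ e => e) ≤ D then y ⟨α, h⟩ else 0
  calc momPair y p = ∑ α ∈ p.support with (α.sum fun _ e => e) ≤ D, g α := by
        refine (Finset.sum_filter_of_ne fun α _ hα => ?_).symm
        by_contra h
        simp [h] at hα
    _ = ∑ β ∈ p.support.subtype (fun α => (α.sum fun _ e => e) ≤ D), g β.1 :=
        (Finset.sum_subtype_eq_sum_filter _).symm
    _ = ∑ β : MomIndex n D, g β := by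
        refine Finset.sum_subset (Finset.subset_univ _) fun β _ hβ => ?_
        simp [g, MvPolynomial.notMem_support_iff.1 (by simpa using hβ)]
    _ = ∑ β : MomIndex n D, p.coeff β.1 * y β :=
        Finset.sum_congr rfl fun β _ => by simp [g, β.2]

theorem momPair_nonneg_of_mem_conicalHull {K : Set (Fin n → ℝ)} {p : MvPolynomial (Fin n) ℝ}
    (hp : p.totalDegree ≤ D) (hpK : ∀ v ∈ K, 0 ≤ MvPolynomial.eval v p) {y : MomSpace n D}
    (hy : y ∈ conicalHull (Lmap n D '' K)) : 0 ≤ momPair y p := by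
  have key := nonneg_of_mem_conicalHull (∑ β : MomIndex n D, p.coeff β.1 • LinearMap.proj β)
    ?_ hy
  · simpa [momPair_eq_sum] using key
  · rintro _ ⟨v, hv, rfl⟩
    simpa [← momPair_eq_sum, momPair_Lmap v hp] using hpK v hv

theorem exists_momPair_eq (f : MomSpace n D →ₗ[ℝ] ℝ) :
    ∃ p : MvPolynomial (Fin n) ℝ, p.totalDegree ≤ D ∧ ∀ y, momPair y p = f y := by
  classical
  refine ⟨∑ β : MomIndex n D, MvPolynomial.monomial β.1 (f (Pi.single β 1)), ?_,
    fun y => ?_⟩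
  · exact (MvPolynomial.totalDegree_finsetSum _ _).trans <|
      Finset.sup_le fun β _ => (MvPolynomial.totalDegree_monomial_le _ _).trans β.2
  · simp only [momPair_eq_sum, MvPolynomial.coeff_sum, MvPolynomial.coeff_monomial,
      Subtype.val_inj, Finset.sum_ite_eq', Finset.mem_univ, if_true]
    conv_rhs => rw [pi_eq_sum_univ' y]
    simp [mul_comm]

end Moments

/-- For `K ⊆ ℝ^n` compact: the dual cone of `C(K) = ConicalHull{ℓ_v : v ∈ K}` (within
polynomials of degree ≤ 2d) is the cone `P_{2d}(K)` of polynomials nonnegative on `K`,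
and consequently `C(K)` is the dual cone of `P_{2d}(K)`. -/
theorem stmt12 {n d : ℕ} (K : Set (Fin n → ℝ)) (hK : IsCompact K) :
    ({p : MvPolynomial (Fin n) ℝ | p.totalDegree ≤ 2 * d ∧
        ∀ y ∈ conicalHull (Lmap n (2 * d) '' K), 0 ≤ momPair y p} =
      {p : MvPolynomial (Fin n) ℝ | p.totalDegree ≤ 2 * d ∧
        ∀ v ∈ K, 0 ≤ MvPolynomial.eval v p}) ∧
    conicalHull (Lmap n (2 * d) '' K) =
      {y : MomSpace n (2 * d) | ∀ p : MvPolynomial (Fin n) ℝ,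
        p.totalDegree ≤ 2 * d → (∀ v ∈ K, 0 ≤ MvPolynomial.eval v p) →
          0 ≤ momPair y p} := by
  set C := conicalHull (Lmap n (2 * d) '' K)
  have hdual : ∀ p : MvPolynomial (Fin n) ℝ, p.totalDegree ≤ 2 * d →
      ((∀ y ∈ C, 0 ≤ momPair y p) ↔ ∀ v ∈ K, 0 ≤ MvPolynomial.eval v p) := fun p hp =>
    ⟨fun h v hv => momPair_Lmap v hp ▸ h _ (subset_conicalHull ⟨v, hv, rfl⟩),
      fun h _ hy => momPair_nonneg_of_mem_conicalHull hp h hy⟩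
  refine ⟨Set.ext fun p => and_congr_right (hdual p),
    Subset.antisymm (fun y hy p hp hpK => (hdual p hp).2 hpK y hy) fun y hy => ?_⟩
  by_contra hyC
  obtain ⟨f, hfK, hfy⟩ :=
    hyperplane_separation_conicalHull (isClosed_conicalHull_Lmap hK) hyC
  obtain ⟨p, hp, hpf⟩ := exists_momPair_eq f.toLinearMap
  have hpK : ∀ v ∈ K, 0 ≤ MvPolynomial.eval v p := fun v hv => by
    simpa [← momPair_Lmap v hp, hpf] using hfK _ ⟨v, hv, rfl⟩
  exact hfy.not_ge (by simpa [hpf] using hy p hp hpK)
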